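/- Every model structure on the lattice N5 can be obtained from the trivial model structure by a finite sequence of left and right Bousfield localizations: for every model structure M on N5 there exist model structures M_0, M_1, ..., M_n on N5 such that M_0 is the trivial model structure, M_n = M, and for each i the structure M_{i+1} is either a left Bousfield localization or a right Bousfield localization of M_i. -/

import Mathlib

/-- The five-element nonmodular lattice `N₅` with `0 < A < C < 1`, `0 < B < 1`,
and `B` incomparable to `A` and `C`. -/
inductive N5 : Type
  | zero | A | B | C | one
  deriving DecidableEq

instance : Fintype N5 where
  elems := {N5.zero, N5.A, N5.B, N5.C, N5.one}
  complete := by intro x; cases x <;> decide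

namespace N5

def leBool : N5 → N5 → Bool
  | zero, _ => true
  | _, one => true
  | A, A => true
  | A, C => true
  | B, B => true
  | C, C => true
  | _, _ => false

instance : LE N5 := ⟨fun x y => leBool x y = true⟩

instance : DecidableRel ((· ≤ ·) : N5 → N5 → Prop) :=
  fun x y => inferInstanceAs (Decidable (leBool x y = true))

def supFn (x y : N5) : N5 := if leBool x y then y else if leBool y x then x else one
def infFn (x y : N5) : N5 := if leBool x y then x else if leBool y x then y else zero

instance : Lattice N5 where
  le := (· ≤ ·)
  le_refl := by decide
  le_trans := by decide
  le_antisymm := by decide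
  sup := supFn
  le_sup_left := by decide
  le_sup_right := by decide
  sup_le := by decide
  inf := infFn
  inf_le_left := by decide
  inf_le_right := by decide
  le_inf := by decide

end N5

section Defs

variable {L : Type*} [Lattice L]

/-- `llp S a b`: `a ≤ b` and `(a, b)` has the left lifting property with respect to
every pair in `S`. -/
def llp (S : L → L → Prop) (a b : L) : Prop :=
  a ≤ b ∧ ∀ x y, S x y → a ≤ x → b ≤ y → b ≤ x

/-- `rlp S x y`: `x ≤ y` and every pair in `S` has the left lifting property with
respect to `(x, y)`. -/
def rlp (S : L → L → Prop) (x y : L) : Prop :=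
  x ≤ y ∧ ∀ a b, S a b → a ≤ x → b ≤ y → b ≤ x

/-- A transfer system: a reflexive transitive subrelation of `≤` closed under pullbacks. -/
structure IsTransferSystem (T : L → L → Prop) : Prop where
  subLE : ∀ x y, T x y → x ≤ y
  refl : ∀ x, T x x
  trans : ∀ x y z, T x y → T y z → T x z
  pullback : ∀ x y z, T x y → z ≤ y → T (x ⊓ z) z

/-- A cotransfer system: a reflexive transitive subrelation of `≤` closed under pushouts. -/
structure IsCotransferSystem (K : L → L → Prop) : Prop where
  subLE : ∀ x y, K x y → x ≤ y
  refl : ∀ x, K x x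
  trans : ∀ x y z, K x y → K y z → K x z
  pushout : ∀ x y z, K x y → x ≤ z → K z (y ⊔ z)

/-- A wide decomposable subcategory of a lattice. -/
structure IsWideDecomposable (W : L → L → Prop) : Prop where
  subLE : ∀ x y, W x y → x ≤ y
  refl : ∀ x, W x x
  trans : ∀ x y z, W x y → W y z → W x z
  decomp : ∀ x y z, W x z → x ≤ y → y ≤ z → W x y ∧ W y z

/-- A model structure on a lattice, given by weak equivalences `W`, cofibrations `C`
and fibrations `F`. -/
structure IsModelStructure (W C F : L → L → Prop) : Prop where
  W_subLE : ∀ x y, W x y → x ≤ y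
  W_refl : ∀ x, W x x
  C_subLE : ∀ x y, C x y → x ≤ y
  C_refl : ∀ x, C x x
  F_subLE : ∀ x y, F x y → x ≤ y
  F_refl : ∀ x, F x x
  two_three_comp : ∀ x y z, x ≤ y → y ≤ z → W x y → W y z → W x z
  two_three_right : ∀ x y z, x ≤ y → y ≤ z → W x y → W x z → W y z
  two_three_left : ∀ x y z, x ≤ y → y ≤ z → W y z → W x z → W x y
  lift_AC : ∀ x y, (C x y ∧ W x y) ↔ llp F x y
  lift_C : ∀ x y, C x y ↔ llp (fun a b => F a b ∧ W a b) x y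
  lift_F : ∀ x y, F x y ↔ rlp (fun a b => C a b ∧ W a b) x y
  lift_AF : ∀ x y, (F x y ∧ W x y) ↔ rlp C x y
  fact_C_AF : ∀ x y, x ≤ y → ∃ z, x ≤ z ∧ z ≤ y ∧ C x z ∧ F z y ∧ W z y
  fact_AC_F : ∀ x y, x ≤ y → ∃ z, x ≤ z ∧ z ≤ y ∧ C x z ∧ W x z ∧ F z y

/-- The smallest transfer system containing `S`: the intersection of all transfer
systems containing `S`. -/
def genTS (S : L → L → Prop) (x y : L) : Prop :=
  ∀ T : L → L → Prop, IsTransferSystem T → (∀ a b, S a b → T a b) → T x y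

end Defs

/-- A bundled model structure on a lattice. -/
structure ModelStructure (L : Type*) [Lattice L] where
  W : L → L → Prop
  C : L → L → Prop
  F : L → L → Prop
  isModel : IsModelStructure W C F

/-- `M'` is a left Bousfield localization of `M`: same cofibrations, more weak equivalences. -/
def IsLeftBousfieldLoc {L : Type*} [Lattice L] (M M' : ModelStructure L) : Prop :=
  M'.C = M.C ∧ ∀ x y, M.W x y → M'.W x y

/-- `M'` is a right Bousfield localization of `M`: same fibrations, more weak equivalences. -/
def IsRightBousfieldLoc {L : Type*} [Lattice L] (M M' : ModelStructure L) : Prop :=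
  M'.F = M.F ∧ ∀ x y, M.W x y → M'.W x y


/-! ### Auxiliary machinery -/

section LiftLemmas

variable {L : Type*} [Lattice L]

lemma llp_refl (S : L → L → Prop) (x : L) : llp S x x :=
  ⟨le_refl x, fun _ _ _ hxa _ => hxa⟩

lemma rlp_refl (S : L → L → Prop) (x : L) : rlp S x x :=
  ⟨le_refl x, fun _ _ _ _ hbx => hbx⟩

lemma llp_trans {S : L → L → Prop} {a b c : L} (h1 : llp S a b) (h2 : llp S b c) :
    llp S a c :=
  ⟨h1.1.trans h2.1, fun x y hs hax hcy =>
    h2.2 x y hs (h1.2 x y hs hax (h2.1.trans hcy)) hcy⟩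

lemma llp_pushout {S : L → L → Prop} {a b z : L} (h : llp S a b) (haz : a ≤ z) :
    llp S z (b ⊔ z) :=
  ⟨le_sup_right, fun x y hs hzx hy =>
    sup_le (h.2 x y hs (haz.trans hzx) (le_sup_left.trans hy)) hzx⟩

lemma rlp_trans {S : L → L → Prop} {x y z : L} (h1 : rlp S x y) (h2 : rlp S y z) :
    rlp S x z :=
  ⟨h1.1.trans h2.1, fun a b hs hax hbz =>
    h1.2 a b hs hax (h2.2 a b hs (hax.trans h1.1) hbz)⟩

lemma rlp_pullback {S : L → L → Prop} {x y z : L} (h : rlp S x y) (hzy : z ≤ y) :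
    rlp S (x ⊓ z) z :=
  ⟨inf_le_right, fun a b hs ha hb =>
    le_inf (h.2 a b hs (ha.trans inf_le_left) (hb.trans hzy)) hb⟩

lemma llp_congr {S S' : L → L → Prop} (h : ∀ x y, S x y ↔ S' x y) (a b : L) :
    llp S a b ↔ llp S' a b := by
  unfold llp
  exact and_congr Iff.rfl
    ⟨fun H x y hs => H x y ((h x y).mpr hs), fun H x y hs => H x y ((h x y).mp hs)⟩

lemma rlp_congr {S S' : L → L → Prop} (h : ∀ x y, S x y ↔ S' x y) (a b : L) :
    rlp S a b ↔ rlp S' a b := by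
  unfold rlp
  exact and_congr Iff.rfl
    ⟨fun H x y hs => H x y ((h x y).mpr hs), fun H x y hs => H x y ((h x y).mp hs)⟩

variable {W C F : L → L → Prop}

lemma W_char (h : IsModelStructure W C F) (x y : L) :
    W x y ↔ ∃ z, llp F x z ∧ rlp C z y := by
  constructor
  · intro hw
    obtain ⟨z, hxz, hzy, hc, hwxz, hf⟩ := h.fact_AC_F x y (h.W_subLE x y hw)
    exact ⟨z, (h.lift_AC x z).mp ⟨hc, hwxz⟩,
      (h.lift_AF z y).mp ⟨hf, h.two_three_right x z y hxz hzy hwxz hw⟩⟩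
  · rintro ⟨z, hac, haf⟩
    have h1 := (h.lift_AC x z).mpr hac
    have h2 := (h.lift_AF z y).mpr haf
    exact h.two_three_comp x z y hac.1 haf.1 h1.2 h2.2

lemma C_trans' (h : IsModelStructure W C F) {x y z : L} (h1 : C x y) (h2 : C y z) :
    C x z :=
  (h.lift_C x z).mpr (llp_trans ((h.lift_C x y).mp h1) ((h.lift_C y z).mp h2))

lemma C_pushout' (h : IsModelStructure W C F) {x y z : L} (h1 : C x y) (hz : x ≤ z) :
    C z (y ⊔ z) :=
  (h.lift_C z (y ⊔ z)).mpr (llp_pushout ((h.lift_C x y).mp h1) hz)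

lemma F_trans' (h : IsModelStructure W C F) {x y z : L} (h1 : F x y) (h2 : F y z) :
    F x z :=
  (h.lift_F x z).mpr (rlp_trans ((h.lift_F x y).mp h1) ((h.lift_F y z).mp h2))

lemma F_pullback' (h : IsModelStructure W C F) {x y z : L} (h1 : F x y) (hz : z ≤ y) :
    F (x ⊓ z) z :=
  (h.lift_F (x ⊓ z) z).mpr (rlp_pullback ((h.lift_F x y).mp h1) hz)

lemma isModel_congr {W' C' F' : L → L → Prop} (h : IsModelStructure W C F)
    (hW : ∀ x y, W x y ↔ W' x y) (hC : ∀ x y, C x y ↔ C' x y)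
    (hF : ∀ x y, F x y ↔ F' x y) : IsModelStructure W' C' F' where
  W_subLE x y hw := h.W_subLE x y ((hW x y).mpr hw)
  W_refl x := (hW x x).mp (h.W_refl x)
  C_subLE x y hc := h.C_subLE x y ((hC x y).mpr hc)
  C_refl x := (hC x x).mp (h.C_refl x)
  F_subLE x y hf := h.F_subLE x y ((hF x y).mpr hf)
  F_refl x := (hF x x).mp (h.F_refl x)
  two_three_comp x y z hxy hyz h1 h2 :=
    (hW x z).mp (h.two_three_comp x y z hxy hyz ((hW x y).mpr h1) ((hW y z).mpr h2))
  two_three_right x y z hxy hyz h1 h2 :=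
    (hW y z).mp (h.two_three_right x y z hxy hyz ((hW x y).mpr h1) ((hW x z).mpr h2))
  two_three_left x y z hxy hyz h1 h2 :=
    (hW x y).mp (h.two_three_left x y z hxy hyz ((hW y z).mpr h1) ((hW x z).mpr h2))
  lift_AC x y :=
    (and_congr (hC x y) (hW x y)).symm.trans ((h.lift_AC x y).trans (llp_congr hF x y))
  lift_C x y := (hC x y).symm.trans ((h.lift_C x y).trans
    (llp_congr (fun a b => and_congr (hF a b) (hW a b)) x y))
  lift_F x y := (hF x y).symm.trans ((h.lift_F x y).trans
    (rlp_congr (fun a b => and_congr (hC a b) (hW a b)) x y))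
  lift_AF x y :=
    (and_congr (hF x y) (hW x y)).symm.trans ((h.lift_AF x y).trans (rlp_congr hC x y))
  fact_C_AF x y hxy := by
    obtain ⟨z, h1, h2, h3, h4, h5⟩ := h.fact_C_AF x y hxy
    exact ⟨z, h1, h2, (hC x z).mp h3, (hF z y).mp h4, (hW z y).mp h5⟩
  fact_AC_F x y hxy := by
    obtain ⟨z, h1, h2, h3, h4, h5⟩ := h.fact_AC_F x y hxy
    exact ⟨z, h1, h2, (hC x z).mp h3, (hW x z).mp h4, (hF z y).mp h5⟩

end LiftLemmas
namespace N5Chain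
open N5

/-- Coerce a boolean relation to a `Prop`-valued one. -/
abbrev tp (r : N5 → N5 → Bool) : N5 → N5 → Prop := fun x y => r x y = true

instance (r : N5 → N5 → Bool) : DecidableRel (tp r) :=
  fun _ _ => inferInstanceAs (Decidable (_ = true))

instance instDecLlp (S : N5 → N5 → Prop) [DecidableRel S] : DecidableRel (llp S) :=
  fun _ _ => inferInstanceAs (Decidable (_ ∧ _))

instance instDecRlp (S : N5 → N5 → Prop) [DecidableRel S] : DecidableRel (rlp S) :=
  fun _ _ => inferInstanceAs (Decidable (_ ∧ _))

/-- The weak equivalences determined by boolean relations `c`, `f`. -/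
abbrev Wp (c f : N5 → N5 → Bool) (x y : N5) : Prop :=
  ∃ z, llp (tp f) x z ∧ rlp (tp c) z y

instance (c f : N5 → N5 → Bool) : DecidableRel (Wp c f) :=
  fun _ _ => Fintype.decidableExistsFintype

lemma Wp_refl (c f : N5 → N5 → Bool) (x : N5) : Wp c f x x :=
  ⟨x, llp_refl _ x, rlp_refl _ x⟩

def andN5 (p : N5 → Bool) : Bool := p .zero && p .A && p .B && p .C && p .one
def orN5 (p : N5 → Bool) : Bool := p .zero || p .A || p .B || p .C || p .one
def impB (a b : Bool) : Bool := !a || b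

lemma andN5_iff {p : N5 → Bool} : andN5 p = true ↔ ∀ x, p x = true := by
  constructor
  · intro h x
    simp only [andN5, Bool.and_eq_true] at h
    cases x
    · exact h.1.1.1.1
    · exact h.1.1.1.2
    · exact h.1.1.2
    · exact h.1.2
    · exact h.2
  · intro h
    simp only [andN5, Bool.and_eq_true]
    exact ⟨⟨⟨⟨h _, h _⟩, h _⟩, h _⟩, h _⟩

lemma orN5_iff {p : N5 → Bool} : orN5 p = true ↔ ∃ x, p x = true := by
  constructor
  · intro h
    simp only [orN5, Bool.or_eq_true] at h
    rcases h with ((((h | h) | h) | h) | h) <;> exact ⟨_, h⟩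
  · rintro ⟨x, h⟩
    simp only [orN5, Bool.or_eq_true]
    cases x
    · exact Or.inl (Or.inl (Or.inl (Or.inl h)))
    · exact Or.inl (Or.inl (Or.inl (Or.inr h)))
    · exact Or.inl (Or.inl (Or.inr h))
    · exact Or.inl (Or.inr h)
    · exact Or.inr h

lemma impB_iff {a b : Bool} : impB a b = true ↔ (a = true → b = true) := by
  cases a <;> cases b <;> simp [impB]

lemma iffB_iff {a b : Bool} : (a == b) = true ↔ (a = true ↔ b = true) := by
  cases a <;> cases b <;> simp

lemma leBool_iff {x y : N5} : N5.leBool x y = true ↔ x ≤ y := Iff.rfl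

def llpB (f : N5 → N5 → Bool) (a b : N5) : Bool :=
  leBool a b && andN5 fun x => andN5 fun y =>
    impB (f x y && leBool a x && leBool b y) (leBool b x)

def rlpB (c : N5 → N5 → Bool) (x y : N5) : Bool :=
  leBool x y && andN5 fun a => andN5 fun b =>
    impB (c a b && leBool a x && leBool b y) (leBool b x)

def WB (c f : N5 → N5 → Bool) (x y : N5) : Bool := orN5 fun z => llpB f x z && rlpB c z y

lemma llpB_iff {f : N5 → N5 → Bool} {a b : N5} : llpB f a b = true ↔ llp (tp f) a b := by
  simp only [llpB, llp, Bool.and_eq_true, andN5_iff, impB_iff, and_imp, leBool_iff, tp]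

lemma rlpB_iff {c : N5 → N5 → Bool} {x y : N5} : rlpB c x y = true ↔ rlp (tp c) x y := by
  simp only [rlpB, rlp, Bool.and_eq_true, andN5_iff, impB_iff, and_imp, leBool_iff, tp]

lemma WB_iff {c f : N5 → N5 → Bool} {x y : N5} : WB c f x y = true ↔ Wp c f x y := by
  simp only [WB, orN5_iff, Bool.and_eq_true, llpB_iff, rlpB_iff, Wp]

end N5Chain
namespace N5Chain
open N5

def msB (c f : N5 → N5 → Bool) : Bool :=
  (andN5 fun x => andN5 fun y => impB (llpB f x y) (c x y)) &&
  (andN5 fun x => andN5 fun y => impB (rlpB c x y) (f x y)) &&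
  (andN5 fun x => andN5 fun y => impB (c x y) (leBool x y)) &&
  (andN5 fun x => c x x) &&
  (andN5 fun x => andN5 fun y => impB (f x y) (leBool x y)) &&
  (andN5 fun x => f x x) &&
  (andN5 fun x => andN5 fun y => andN5 fun z =>
     impB (WB c f x y && WB c f y z) (WB c f x z)) &&
  (andN5 fun x => andN5 fun y => andN5 fun z =>
     impB (leBool x y && leBool y z && WB c f x y && WB c f x z) (WB c f y z)) &&
  (andN5 fun x => andN5 fun y => andN5 fun z =>
     impB (leBool x y && leBool y z && WB c f y z && WB c f x z) (WB c f x y)) &&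
  (andN5 fun x => andN5 fun y => ((c x y && WB c f x y) == llpB f x y)) &&
  (andN5 fun x => andN5 fun y => (c x y == llpB (fun a b => f a b && WB c f a b) x y)) &&
  (andN5 fun x => andN5 fun y => (f x y == rlpB (fun a b => c a b && WB c f a b) x y)) &&
  (andN5 fun x => andN5 fun y => ((f x y && WB c f x y) == rlpB c x y)) &&
  (andN5 fun x => andN5 fun y => impB (leBool x y)
     (orN5 fun z => leBool x z && leBool z y && c x z && f z y && WB c f z y)) &&
  (andN5 fun x => andN5 fun y => impB (leBool x y)
     (orN5 fun z => leBool x z && leBool z y && c x z && WB c f x z && f z y))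

lemma llpB_and_iff {c f : N5 → N5 → Bool} {x y : N5} :
    llpB (fun a b => f a b && WB c f a b) x y = true ↔
      llp (fun a b => tp f a b ∧ Wp c f a b) x y :=
  llpB_iff.trans (llp_congr (fun a b => by
    simp only [tp, Bool.and_eq_true, WB_iff]) x y)

lemma rlpB_and_iff {c f : N5 → N5 → Bool} {x y : N5} :
    rlpB (fun a b => c a b && WB c f a b) x y = true ↔
      rlp (fun a b => tp c a b ∧ Wp c f a b) x y :=
  rlpB_iff.trans (rlp_congr (fun a b => by
    simp only [tp, Bool.and_eq_true, WB_iff]) x y)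

lemma msB_spec {c f : N5 → N5 → Bool} (h : msB c f = true) :
    IsModelStructure (Wp c f) (tp c) (tp f) := by
  simp only [msB, Bool.and_eq_true, andN5_iff, orN5_iff, impB_iff, iffB_iff, and_imp,
    llpB_and_iff, rlpB_and_iff, llpB_iff, rlpB_iff, WB_iff, leBool_iff] at h
  obtain ⟨⟨⟨⟨⟨⟨⟨⟨⟨⟨⟨⟨⟨⟨h1, h2⟩, h3⟩, h4⟩, h5⟩, h6⟩, h7⟩, h8⟩, h9⟩, h10⟩, h11⟩,
    h12⟩, h13⟩, h14⟩, h15⟩ := h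
  refine ⟨?_, ?_, ?_, ?_, ?_, ?_, ?_, ?_, ?_, ?_, ?_, ?_, ?_, ?_, ?_⟩
  · exact fun x y hw => hw.choose_spec.1.1.trans hw.choose_spec.2.1
  · exact fun x => Wp_refl c f x
  · exact h3
  · exact h4
  · exact h5
  · exact h6
  · exact fun x y z _ _ w1 w2 => h7 x y z w1 w2
  · exact fun x y z hxy hyz w1 w2 => h8 x y z hxy hyz w1 w2
  · exact fun x y z hxy hyz w1 w2 => h9 x y z hxy hyz w1 w2
  · exact fun x y => (and_congr Iff.rfl Iff.rfl).trans (h10 x y)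
  · exact fun x y => (h11 x y).trans (llp_congr (fun a b => by
      simp only [tp, Bool.and_eq_true, WB_iff]) x y)
  · exact fun x y => (h12 x y).trans (rlp_congr (fun a b => by
      simp only [tp, Bool.and_eq_true, WB_iff]) x y)
  · exact fun x y => (and_congr Iff.rfl Iff.rfl).trans (h13 x y)
  · intro x y hxy
    obtain ⟨z, hz⟩ := h14 x y hxy
    exact ⟨z, hz.1.1.1.1, hz.1.1.1.2, hz.1.1.2, hz.1.2, hz.2⟩
  · intro x y hxy
    obtain ⟨z, hz⟩ := h15 x y hxy
    exact ⟨z, hz.1.1.1.1, hz.1.1.1.2, hz.1.1.2, hz.1.2, hz.2⟩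

lemma msB_of {c f : N5 → N5 → Bool} (h : IsModelStructure (Wp c f) (tp c) (tp f)) :
    msB c f = true := by
  simp only [msB, Bool.and_eq_true, andN5_iff, orN5_iff, impB_iff, iffB_iff, and_imp,
    llpB_and_iff, rlpB_and_iff, llpB_iff, rlpB_iff, WB_iff, leBool_iff]
  refine ⟨⟨⟨⟨⟨⟨⟨⟨⟨⟨⟨⟨⟨⟨?_, ?_⟩, ?_⟩, ?_⟩, ?_⟩, ?_⟩, ?_⟩, ?_⟩, ?_⟩, ?_⟩, ?_⟩,
    ?_⟩, ?_⟩, ?_⟩, ?_⟩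
  · exact fun x y hl => ((h.lift_AC x y).mpr hl).1
  · exact fun x y hr => ((h.lift_AF x y).mpr hr).1
  · exact h.C_subLE
  · exact h.C_refl
  · exact h.F_subLE
  · exact h.F_refl
  · exact fun x y z w1 w2 =>
      h.two_three_comp x y z (h.W_subLE x y w1) (h.W_subLE y z w2) w1 w2
  · exact fun x y z hxy hyz w1 w2 => h.two_three_right x y z hxy hyz w1 w2
  · exact fun x y z hxy hyz w1 w2 => h.two_three_left x y z hxy hyz w1 w2
  · exact fun x y => h.lift_AC x y
  · exact fun x y => (h.lift_C x y).trans ((llp_congr (fun a b => by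
      simp only [tp, Bool.and_eq_true, WB_iff]) x y).symm)
  · exact fun x y => (h.lift_F x y).trans ((rlp_congr (fun a b => by
      simp only [tp, Bool.and_eq_true, WB_iff]) x y).symm)
  · exact fun x y => h.lift_AF x y
  · intro x y hxy
    obtain ⟨z, h1, h2, h3, h4, h5⟩ := h.fact_C_AF x y hxy
    exact ⟨z, ⟨⟨⟨h1, h2⟩, h3⟩, h4⟩, h5⟩
  · intro x y hxy
    obtain ⟨z, h1, h2, h3, h4, h5⟩ := h.fact_AC_F x y hxy
    exact ⟨z, ⟨⟨⟨h1, h2⟩, h3⟩, h4⟩, h5⟩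

/-- Bundle a boolean pair into a model structure. -/
def mkMS (c f : N5 → N5 → Bool) (h : msB c f = true) : ModelStructure N5 :=
  ⟨Wp c f, tp c, tp f, msB_spec h⟩

end N5Chain
namespace N5Chain
open N5

/-- Build a boolean relation on `N5` from the eight bits for the non-reflexive pairs. -/
def mkRel (b1 b2 b3 b4 b5 b6 b7 b8 : Bool) (x y : N5) : Bool :=
  match x, y with
  | .zero, .zero => true
  | .A, .A => true
  | .B, .B => true
  | .C, .C => true
  | .one, .one => true
  | .zero, .A => b1
  | .zero, .B => b2
  | .zero, .C => b3
  | .zero, .one => b4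
  | .A, .C => b5
  | .A, .one => b6
  | .B, .one => b7
  | .C, .one => b8
  | _, _ => false

lemma enc_iff (R : N5 → N5 → Prop) (d : ∀ x y, Decidable (R x y))
    (hle : ∀ x y, R x y → x ≤ y) (hrefl : ∀ x, R x x) (x y : N5) :
    R x y ↔ tp (mkRel (@decide _ (d .zero .A)) (@decide _ (d .zero .B))
      (@decide _ (d .zero .C)) (@decide _ (d .zero .one)) (@decide _ (d .A .C))
      (@decide _ (d .A .one)) (@decide _ (d .B .one)) (@decide _ (d .C .one))) x y := by
  cases x <;> cases y <;>
    first
      | exact iff_of_true (hrefl _) rfl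
      | exact (@decide_eq_true_iff _ (d _ _)).symm
      | exact iff_of_false (fun h => absurd (hle _ _ h) (by decide)) (fun h => nomatch h)

def R255 : N5 → N5 → Bool := mkRel true true true true true true true true

lemma tpR255_iff : ∀ x y : N5, tp R255 x y ↔ x ≤ y := by decide

lemma tpR255_eq : tp R255 = (fun x y : N5 => x ≤ y) :=
  funext fun x => funext fun y => propext (tpR255_iff x y)

/-- The goal: `M` is an iterated Bousfield localization of the trivial model structure. -/
def GoalFor (M : ModelStructure N5) : Prop :=
  ∃ (n : ℕ) (Ms : Fin (n + 1) → ModelStructure N5),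
    (Ms 0).W = (fun x y => x = y) ∧
    (Ms 0).C = (fun x y => x ≤ y) ∧
    (Ms 0).F = (fun x y => x ≤ y) ∧
    Ms (Fin.last n) = M ∧
    (∀ i : Fin n,
      IsLeftBousfieldLoc (Ms i.castSucc) (Ms i.succ) ∨
      IsRightBousfieldLoc (Ms i.castSucc) (Ms i.succ))

set_option maxRecDepth 10000 in
/-- The trivial model structure on `N5`. -/
def TrivM : ModelStructure N5 :=
  ⟨fun x y => x = y, fun x y => x ≤ y, fun x y => x ≤ y,
    ⟨by decide, by decide, by decide, by decide, by decide, by decide, by decide,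
     by decide, by decide, by decide, by decide, by decide, by decide, by decide,
     by decide⟩⟩

lemma base : GoalFor TrivM :=
  ⟨0, fun _ => TrivM, rfl, rfl, rfl, rfl, fun i => i.elim0⟩

lemma step_extend {M M' : ModelStructure N5} (h : GoalFor M)
    (hs : IsLeftBousfieldLoc M M' ∨ IsRightBousfieldLoc M M') : GoalFor M' := by
  obtain ⟨n, Ms, h1, h2, h3, h4, h5⟩ := h
  refine ⟨n + 1, Fin.snoc Ms M', ?_, ?_, ?_, ?_, ?_⟩
  · rw [show (0 : Fin (n + 1 + 1)) = Fin.castSucc 0 from (Fin.castSucc_zero).symm,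
      Fin.snoc_castSucc]
    exact h1
  · rw [show (0 : Fin (n + 1 + 1)) = Fin.castSucc 0 from (Fin.castSucc_zero).symm,
      Fin.snoc_castSucc]
    exact h2
  · rw [show (0 : Fin (n + 1 + 1)) = Fin.castSucc 0 from (Fin.castSucc_zero).symm,
      Fin.snoc_castSucc]
    exact h3
  · rw [Fin.snoc_last]
  · intro i
    refine Fin.lastCases ?_ (fun j => ?_) i
    · rw [Fin.succ_last, Fin.snoc_last, Fin.snoc_castSucc, h4]
      exact hs
    · rw [Fin.succ_castSucc, Fin.snoc_castSucc, Fin.snoc_castSucc]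
      exact h5 j

lemma schemeA (M : ModelStructure N5) (c f : N5 → N5 → Bool)
    (hC : ∀ x y, M.C x y ↔ tp c x y)
    (hW : ∀ x y, M.W x y ↔ Wp c f x y)
    (hms : msB c R255 = true) : GoalFor M := by
  have g1 : GoalFor (mkMS c R255 hms) :=
    step_extend base (Or.inr ⟨tpR255_eq, fun x y (h : x = y) => h ▸ Wp_refl c R255 x⟩)
  refine step_extend g1 (Or.inl ⟨funext fun x => funext fun y => propext (hC x y), ?_⟩)
  rintro x y ⟨z, hl, hr⟩
  have hxz : x = z :=
    le_antisymm hl.1 (hl.2 x z ((tpR255_iff x z).mpr hl.1) (le_refl x) (le_refl z))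
  exact (hW x y).mpr ⟨x, llp_refl _ x, by rw [hxz]; exact hr⟩

lemma schemeB (M : ModelStructure N5) (c f : N5 → N5 → Bool)
    (hF : ∀ x y, M.F x y ↔ tp f x y)
    (hW : ∀ x y, M.W x y ↔ Wp c f x y)
    (hms : msB R255 f = true) : GoalFor M := by
  have g1 : GoalFor (mkMS R255 f hms) :=
    step_extend base (Or.inl ⟨tpR255_eq, fun x y (h : x = y) => h ▸ Wp_refl R255 f x⟩)
  refine step_extend g1 (Or.inr ⟨funext fun x => funext fun y => propext (hF x y), ?_⟩)
  rintro x y ⟨z, hl, hr⟩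
  have hzy : z = y :=
    le_antisymm hr.1 (hr.2 z y ((tpR255_iff z y).mpr hr.1) (le_refl z) (le_refl y))
  exact (hW x y).mpr ⟨y, by rw [← hzy]; exact hl, rlp_refl _ y⟩

end N5Chain
namespace N5Chain
open N5

def R0 : N5 → N5 → Bool := mkRel false false false false false false false false
def R1 : N5 → N5 → Bool := mkRel true false false false false false false false
def R2 : N5 → N5 → Bool := mkRel false true false false false false false false
def R3 : N5 → N5 → Bool := mkRel true true false false false false false false
def R5 : N5 → N5 → Bool := mkRel true false true false false false false false
def R7 : N5 → N5 → Bool := mkRel true true true false false false false false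
def R15 : N5 → N5 → Bool := mkRel true true true true false false false false
def R16 : N5 → N5 → Bool := mkRel false false false false true false false false
def R18 : N5 → N5 → Bool := mkRel false true false false true false false false
def R21 : N5 → N5 → Bool := mkRel true false true false true false false false
def R23 : N5 → N5 → Bool := mkRel true true true false true false false false
def R31 : N5 → N5 → Bool := mkRel true true true true true false false false
def R50 : N5 → N5 → Bool := mkRel false true false false true true false false
def R63 : N5 → N5 → Bool := mkRel true true true true true true false false
def R64 : N5 → N5 → Bool := mkRel false false false false false false true false
def R65 : N5 → N5 → Bool := mkRel true false false false false false true false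
def R69 : N5 → N5 → Bool := mkRel true false true false false false true false
def R79 : N5 → N5 → Bool := mkRel true true true true false false true false
def R80 : N5 → N5 → Bool := mkRel false false false false true false true false
def R84 : N5 → N5 → Bool := mkRel false false true false true false true false
def R85 : N5 → N5 → Bool := mkRel true false true false true false true false
def R95 : N5 → N5 → Bool := mkRel true true true true true false true false
def R127 : N5 → N5 → Bool := mkRel true true true true true true true false
def R128 : N5 → N5 → Bool := mkRel false false false false false false false true
def R130 : N5 → N5 → Bool := mkRel false true false false false false false true
def R131 : N5 → N5 → Bool := mkRel true true false false false false false true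
def R143 : N5 → N5 → Bool := mkRel true true true true false false false true
def R160 : N5 → N5 → Bool := mkRel false false false false false true false true
def R162 : N5 → N5 → Bool := mkRel false true false false false true false true
def R176 : N5 → N5 → Bool := mkRel false false false false true true false true
def R178 : N5 → N5 → Bool := mkRel false true false false true true false true
def R191 : N5 → N5 → Bool := mkRel true true true true true true false true
def R192 : N5 → N5 → Bool := mkRel false false false false false false true true
def R193 : N5 → N5 → Bool := mkRel true false false false false false true true
def R207 : N5 → N5 → Bool := mkRel true true true true false false true true
def R224 : N5 → N5 → Bool := mkRel false false false false false true true true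
def R232 : N5 → N5 → Bool := mkRel false false false true false true true true
def R233 : N5 → N5 → Bool := mkRel true false false true false true true true
def R234 : N5 → N5 → Bool := mkRel false true false true false true true true
def R235 : N5 → N5 → Bool := mkRel true true false true false true true true
def R240 : N5 → N5 → Bool := mkRel false false false false true true true true
def R248 : N5 → N5 → Bool := mkRel false false false true true true true true
def R250 : N5 → N5 → Bool := mkRel false true false true true true true true
def R252 : N5 → N5 → Bool := mkRel false false true true true true true true
def R253 : N5 → N5 → Bool := mkRel true false true true true true true true
def R254 : N5 → N5 → Bool := mkRel false true true true true true true true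

def ctsL : List (N5 → N5 → Bool) := [R0, R16, R64, R65, R80, R84, R85, R128, R160, R162, R176, R178, R192, R193, R224, R232, R233, R234, R235, R240, R248, R250, R252, R253, R254, R255]
def tsL : List (N5 → N5 → Bool) := [R0, R1, R2, R3, R5, R7, R15, R16, R18, R21, R23, R31, R50, R63, R69, R79, R85, R95, R127, R130, R131, R143, R178, R191, R207, R255]

abbrev ctsB (r : N5 → N5 → Bool) : Prop :=
  (∀ x y z : N5, tp r x y → tp r y z → tp r x z) ∧
  (∀ x y z : N5, tp r x y → x ≤ z → tp r z (y ⊔ z))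

abbrev tsB (r : N5 → N5 → Bool) : Prop :=
  (∀ x y z : N5, tp r x y → tp r y z → tp r x z) ∧
  (∀ x y z : N5, tp r x y → z ≤ y → tp r (x ⊓ z) z)

def ctsb (r : N5 → N5 → Bool) : Bool :=
  (andN5 fun x => andN5 fun y => andN5 fun z => impB (r x y && r y z) (r x z)) &&
  (andN5 fun x => andN5 fun y => andN5 fun z =>
    impB (r x y && leBool x z) (r z (supFn y z)))

def tsb (r : N5 → N5 → Bool) : Bool :=
  (andN5 fun x => andN5 fun y => andN5 fun z => impB (r x y && r y z) (r x z)) &&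
  (andN5 fun x => andN5 fun y => andN5 fun z =>
    impB (r x y && leBool z y) (r (infFn x z) z))

lemma sup_eq_supFn (x y : N5) : x ⊔ y = supFn x y := rfl
lemma inf_eq_infFn (x y : N5) : x ⊓ y = infFn x y := rfl

lemma ctsb_iff {r : N5 → N5 → Bool} : ctsb r = true ↔ ctsB r := by
  simp only [ctsb, ctsB, Bool.and_eq_true, andN5_iff, impB_iff, and_imp, leBool_iff, tp,
    sup_eq_supFn]

lemma tsb_iff {r : N5 → N5 → Bool} : tsb r = true ↔ tsB r := by
  simp only [tsb, tsB, Bool.and_eq_true, andN5_iff, impB_iff, and_imp, leBool_iff, tp,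
    inf_eq_infFn]

def PEqB (r s : N5 → N5 → Bool) : Bool := andN5 fun x => andN5 fun y => r x y == s x y

lemma PEqB_iff {r s : N5 → N5 → Bool} : PEqB r s = true ↔ ∀ x y, r x y = s x y := by
  simp only [PEqB, andN5_iff, beq_iff_eq]

set_option maxRecDepth 100000 in
theorem cts_classify : ∀ b1 b2 b3 b4 b5 b6 b7 b8 : Bool,
    ctsb (mkRel b1 b2 b3 b4 b5 b6 b7 b8) = true →
    ∃ i : Fin ctsL.length, PEqB (mkRel b1 b2 b3 b4 b5 b6 b7 b8) (ctsL.get i) = true := by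
  decide

set_option maxRecDepth 100000 in
theorem ts_classify : ∀ b1 b2 b3 b4 b5 b6 b7 b8 : Bool,
    tsb (mkRel b1 b2 b3 b4 b5 b6 b7 b8) = true →
    ∃ j : Fin tsL.length, PEqB (mkRel b1 b2 b3 b4 b5 b6 b7 b8) (tsL.get j) = true := by
  decide

def goodC : Fin ctsL.length → Bool := fun i => ([0, 3, 5, 6, 9, 15, 16, 17, 18, 22, 23, 24, 25] : List Nat).contains i.val
def goodF : Fin tsL.length → Bool := fun j => ([0, 6, 12, 13, 14, 15, 18, 19, 21, 22, 23, 24, 25] : List Nat).contains j.val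

set_option maxRecDepth 1000000 in
set_option maxHeartbeats 4000000 in
theorem goodCA : ∀ i : Fin ctsL.length, goodC i = true → msB (ctsL.get i) R255 = true := by
  decide

set_option maxRecDepth 1000000 in
set_option maxHeartbeats 4000000 in
theorem goodFB : ∀ j : Fin tsL.length, goodF j = true → msB R255 (tsL.get j) = true := by
  decide

set_option maxRecDepth 1000000 in
set_option maxHeartbeats 16000000 in
theorem badPairs : ∀ (i : Fin ctsL.length) (j : Fin tsL.length),
    goodC i = false → goodF j = false → msB (ctsL.get i) (tsL.get j) = true →
    (i.val = 8 ∧ j.val = 17) ∨ (i.val = 14 ∧ j.val = 11) ∨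
    (i.val = 20 ∧ j.val = 5) ∨ (i.val = 21 ∧ j.val = 4) := by
  decide

theorem ms_233_255 : msB R233 R255 = true := by decide
theorem ms_233_95 : msB R233 R95 = true := by decide
theorem ms_235_255 : msB R235 R255 = true := by decide
theorem ms_235_31 : msB R235 R31 = true := by decide
theorem ms_255_207 : msB R255 R207 = true := by decide
theorem ms_248_207 : msB R248 R207 = true := by decide
theorem ms_255_143 : msB R255 R143 = true := by decide
theorem ms_250_143 : msB R250 R143 = true := by decide

theorem wsub_233_255_233_95 : ∀ x y : N5, Wp R233 R255 x y → Wp R233 R95 x y := by decide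
theorem wsub_233_95_160_95 : ∀ x y : N5, Wp R233 R95 x y → Wp R160 R95 x y := by decide
theorem wsub_235_255_235_31 : ∀ x y : N5, Wp R235 R255 x y → Wp R235 R31 x y := by decide
theorem wsub_235_31_224_31 : ∀ x y : N5, Wp R235 R31 x y → Wp R224 R31 x y := by decide
theorem wsub_255_207_248_207 : ∀ x y : N5, Wp R255 R207 x y → Wp R248 R207 x y := by decide
theorem wsub_248_207_248_7 : ∀ x y : N5, Wp R248 R207 x y → Wp R248 R7 x y := by decide
theorem wsub_255_143_250_143 : ∀ x y : N5, Wp R255 R143 x y → Wp R250 R143 x y := by decide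
theorem wsub_250_143_250_5 : ∀ x y : N5, Wp R250 R143 x y → Wp R250 R5 x y := by decide

lemma badChain1 (M : ModelStructure N5)
    (hF : ∀ x y, M.F x y ↔ tp R95 x y)
    (hW : ∀ x y, M.W x y ↔ Wp R160 R95 x y) : GoalFor M := by
  have g1 : GoalFor (mkMS R233 R255 ms_233_255) :=
    step_extend base (Or.inr ⟨tpR255_eq, fun x y (h : x = y) => h ▸ Wp_refl R233 R255 x⟩)
  have g2 : GoalFor (mkMS R233 R95 ms_233_95) :=
    step_extend g1 (Or.inl ⟨rfl, wsub_233_255_233_95⟩)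
  refine step_extend g2 (Or.inr ⟨funext fun x => funext fun y => propext (hF x y), ?_⟩)
  exact fun x y hw => (hW x y).mpr (wsub_233_95_160_95 x y hw)

lemma badChain2 (M : ModelStructure N5)
    (hF : ∀ x y, M.F x y ↔ tp R31 x y)
    (hW : ∀ x y, M.W x y ↔ Wp R224 R31 x y) : GoalFor M := by
  have g1 : GoalFor (mkMS R235 R255 ms_235_255) :=
    step_extend base (Or.inr ⟨tpR255_eq, fun x y (h : x = y) => h ▸ Wp_refl R235 R255 x⟩)
  have g2 : GoalFor (mkMS R235 R31 ms_235_31) :=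
    step_extend g1 (Or.inl ⟨rfl, wsub_235_255_235_31⟩)
  refine step_extend g2 (Or.inr ⟨funext fun x => funext fun y => propext (hF x y), ?_⟩)
  exact fun x y hw => (hW x y).mpr (wsub_235_31_224_31 x y hw)

lemma badChain3 (M : ModelStructure N5)
    (hC : ∀ x y, M.C x y ↔ tp R248 x y)
    (hW : ∀ x y, M.W x y ↔ Wp R248 R7 x y) : GoalFor M := by
  have g1 : GoalFor (mkMS R255 R207 ms_255_207) :=
    step_extend base (Or.inl ⟨tpR255_eq, fun x y (h : x = y) => h ▸ Wp_refl R255 R207 x⟩)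
  have g2 : GoalFor (mkMS R248 R207 ms_248_207) :=
    step_extend g1 (Or.inr ⟨rfl, wsub_255_207_248_207⟩)
  refine step_extend g2 (Or.inl ⟨funext fun x => funext fun y => propext (hC x y), ?_⟩)
  exact fun x y hw => (hW x y).mpr (wsub_248_207_248_7 x y hw)

lemma badChain4 (M : ModelStructure N5)
    (hC : ∀ x y, M.C x y ↔ tp R250 x y)
    (hW : ∀ x y, M.W x y ↔ Wp R250 R5 x y) : GoalFor M := by
  have g1 : GoalFor (mkMS R255 R143 ms_255_143) :=
    step_extend base (Or.inl ⟨tpR255_eq, fun x y (h : x = y) => h ▸ Wp_refl R255 R143 x⟩)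
  have g2 : GoalFor (mkMS R250 R143 ms_250_143) :=
    step_extend g1 (Or.inr ⟨rfl, wsub_255_143_250_143⟩)
  refine step_extend g2 (Or.inl ⟨funext fun x => funext fun y => propext (hC x y), ?_⟩)
  exact fun x y hw => (hW x y).mpr (wsub_250_143_250_5 x y hw)

end N5Chain
open N5Chain

/-- Every model structure on `N5` is obtained from the trivial model
structure by a finite sequence of left and right Bousfield localizations. -/
theorem every_model_structure_on_N5_is_iterated_bousfield_localization_of_trivial
    (M : ModelStructure N5) :
    ∃ (n : ℕ) (Ms : Fin (n + 1) → ModelStructure N5),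
      (Ms 0).W = (fun x y => x = y) ∧
      (Ms 0).C = (fun x y => x ≤ y) ∧
      (Ms 0).F = (fun x y => x ≤ y) ∧
      Ms (Fin.last n) = M ∧
      (∀ i : Fin n,
        IsLeftBousfieldLoc (Ms i.castSucc) (Ms i.succ) ∨
        IsRightBousfieldLoc (Ms i.castSucc) (Ms i.succ)) := by
  show N5Chain.GoalFor M
  have dC : ∀ x y, Decidable (M.C x y) := fun x y => Classical.propDecidable _
  have dF : ∀ x y, Decidable (M.F x y) := fun x y => Classical.propDecidable _
  obtain ⟨b1, b2, b3, b4, b5, b6, b7, b8, hC⟩ :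
      ∃ b1 b2 b3 b4 b5 b6 b7 b8, ∀ x y, M.C x y ↔ tp (mkRel b1 b2 b3 b4 b5 b6 b7 b8) x y :=
    ⟨_, _, _, _, _, _, _, _, enc_iff M.C dC M.isModel.C_subLE M.isModel.C_refl⟩
  obtain ⟨a1, a2, a3, a4, a5, a6, a7, a8, hF⟩ :
      ∃ a1 a2 a3 a4 a5 a6 a7 a8, ∀ x y, M.F x y ↔ tp (mkRel a1 a2 a3 a4 a5 a6 a7 a8) x y :=
    ⟨_, _, _, _, _, _, _, _, enc_iff M.F dF M.isModel.F_subLE M.isModel.F_refl⟩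
  set c0 : N5 → N5 → Bool := mkRel b1 b2 b3 b4 b5 b6 b7 b8 with hc0
  set f0 : N5 → N5 → Bool := mkRel a1 a2 a3 a4 a5 a6 a7 a8 with hf0
  have hW : ∀ x y, M.W x y ↔ Wp c0 f0 x y := fun x y =>
    (W_char M.isModel x y).trans
      (exists_congr fun z => and_congr (llp_congr hF x z) (rlp_congr hC z y))
  have hcts : ctsb c0 = true :=
    ctsb_iff.mpr
      ⟨fun x y z h1 h2 => (hC x z).mp
        (C_trans' M.isModel ((hC x y).mpr h1) ((hC y z).mpr h2)),
       fun x y z h1 hz => (hC z (y ⊔ z)).mp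
        (C_pushout' M.isModel ((hC x y).mpr h1) hz)⟩
  have hts : tsb f0 = true :=
    tsb_iff.mpr
      ⟨fun x y z h1 h2 => (hF x z).mp
        (F_trans' M.isModel ((hF x y).mpr h1) ((hF y z).mpr h2)),
       fun x y z h1 hz => (hF (x ⊓ z) z).mp
        (F_pullback' M.isModel ((hF x y).mpr h1) hz)⟩
  obtain ⟨i, hpi⟩ := cts_classify b1 b2 b3 b4 b5 b6 b7 b8 (hc0 ▸ hcts)
  obtain ⟨j, hpj⟩ := ts_classify a1 a2 a3 a4 a5 a6 a7 a8 (hf0 ▸ hts)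
  have ec : c0 = ctsL.get i :=
    funext fun x => funext fun y => by rw [hc0]; exact PEqB_iff.mp hpi x y
  have ef : f0 = tsL.get j :=
    funext fun x => funext fun y => by rw [hf0]; exact PEqB_iff.mp hpj x y
  by_cases hgc : goodC i = true
  · exact schemeA M (ctsL.get i) (tsL.get j)
      (fun x y => (hC x y).trans (by rw [ec]))
      (fun x y => (hW x y).trans (by rw [ec, ef]))
      (goodCA i hgc)
  · by_cases hgf : goodF j = true
    · exact schemeB M (ctsL.get i) (tsL.get j)
        (fun x y => (hF x y).trans (by rw [ef]))
        (fun x y => (hW x y).trans (by rw [ec, ef]))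
        (goodFB j hgf)
    · have hms : msB (ctsL.get i) (tsL.get j) = true := by
        rw [← ec, ← ef]
        exact msB_of (isModel_congr M.isModel hW hC hF)
      rcases badPairs i j (Bool.eq_false_iff.mpr hgc) (Bool.eq_false_iff.mpr hgf) hms with
        ⟨hvi, hvj⟩ | ⟨hvi, hvj⟩ | ⟨hvi, hvj⟩ | ⟨hvi, hvj⟩
      · obtain rfl : i = ⟨8, by decide⟩ := Fin.val_injective hvi
        obtain rfl : j = ⟨17, by decide⟩ := Fin.val_injective hvj
        exact badChain1 M
          (fun x y => (hF x y).trans (by rw [show f0 = R95 from ef]))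
          (fun x y => (hW x y).trans
            (by rw [show c0 = R160 from ec, show f0 = R95 from ef]))
      · obtain rfl : i = ⟨14, by decide⟩ := Fin.val_injective hvi
        obtain rfl : j = ⟨11, by decide⟩ := Fin.val_injective hvj
        exact badChain2 M
          (fun x y => (hF x y).trans (by rw [show f0 = R31 from ef]))
          (fun x y => (hW x y).trans
            (by rw [show c0 = R224 from ec, show f0 = R31 from ef]))
      · obtain rfl : i = ⟨20, by decide⟩ := Fin.val_injective hvi
        obtain rfl : j = ⟨5, by decide⟩ := Fin.val_injective hvj
        exact badChain3 M
          (fun x y => (hC x y).trans (by rw [show c0 = R248 from ec]))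
          (fun x y => (hW x y).trans
            (by rw [show c0 = R248 from ec, show f0 = R7 from ef]))
      · obtain rfl : i = ⟨21, by decide⟩ := Fin.val_injective hvi
        obtain rfl : j = ⟨4, by decide⟩ := Fin.val_injective hvj
        exact badChain4 M
          (fun x y => (hC x y).trans (by rw [show c0 = R250 from ec]))
          (fun x y => (hW x y).trans
            (by rw [show c0 = R250 from ec, show f0 = R5 from ef]))
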